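/- (The energy of the diffusion model satisfies the stability assumption (H_st)) For every N ≥ 1 and every family of marked points 𝘅 : Fin N → ℝ² × C([0,1],ℝ²), writing 𝘅_i = (x_i, m_i), the energy H := Σ_{i=1}^N Ψ(𝘅_i) + Σ_{i<j} Φ(𝘅_i, 𝘅_j) satisfies H ≥ −(c₁ + c_φ) · Σ_{i=1}^N (1 + ‖m_i‖^{2+δ}). -/

import Mathlib

/-! Beyond range `a₀ + ‖m₁‖ + ‖m₂‖` the pair potential vanishes while `φ ≤ 0` there, and within
range the mark interaction is nonnegative; either way `Φ(𝘅₁, 𝘅₂) ≥ φ(|x₁ - x₂|)`. So the pair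
energy inherits the stability bound `-c_φ N ≤ -c_φ Σ (1 + ‖m_i‖^{2+δ})` of `φ`, and the
self-energy contributes `-c₁ Σ (1 + ‖m_i‖^{2+δ})` directly. -/

/-- The two-body potential `Φ` of the diffusion model of Section 4: locations in `ℝ²`,
marks in `C([0,1],ℝ²)` with the supremum norm. -/
noncomputable def diffusionPairPotential (a₀ : ℝ) (φ φt : ℝ → ℝ)
    (p q : EuclideanSpace ℝ (Fin 2) × C(Set.Icc (0 : ℝ) 1, EuclideanSpace ℝ (Fin 2))) :
    ℝ :=
  if dist p.1 q.1 ≤ a₀ + ‖p.2‖ + ‖q.2‖ then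
    φ (dist p.1 q.1) + ∫ s : Set.Icc (0 : ℝ) 1, φt ‖p.2 s - q.2 s‖
  else 0

open Finset

lemma le_diffusionPairPotential {a₀ : ℝ} {φ φt : ℝ → ℝ} (hφt_nonneg : ∀ u, 0 ≤ φt u)
    (hφ_neg : ∀ u : ℝ, a₀ ≤ u → φ u ≤ 0)
    (p q : EuclideanSpace ℝ (Fin 2) × C(Set.Icc (0 : ℝ) 1, EuclideanSpace ℝ (Fin 2))) :
    φ (dist p.1 q.1) ≤ diffusionPairPotential a₀ φ φt p q := by
  unfold diffusionPairPotential
  split_ifs with h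
  · have : 0 ≤ ∫ s : Set.Icc (0 : ℝ) 1, φt ‖p.2 s - q.2 s‖ :=
      MeasureTheory.integral_nonneg fun s => hφt_nonneg _
    linarith
  · refine hφ_neg _ ?_
    have := norm_nonneg p.2
    have := norm_nonneg q.2
    linarith

lemma card_le_sum_one_add {ι : Type*} [Fintype ι] {f : ι → ℝ} (hf : ∀ i, 0 ≤ f i) :
    (Fintype.card ι : ℝ) ≤ ∑ i, (1 + f i) := by
  rw [sum_add_distrib, sum_const, card_univ, nsmul_one]
  exact le_add_of_nonneg_right (sum_nonneg fun i _ => hf i)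

theorem diffusion_energy_stable_general
    (a₀ cφ δ c₁ : ℝ) (hcφ : 0 ≤ cφ)
    (φ φt : ℝ → ℝ) (hφt_nonneg : ∀ u, 0 ≤ φt u)
    (hφ_stable : ∀ N : ℕ, 1 ≤ N → ∀ x : Fin N → EuclideanSpace ℝ (Fin 2),
      -(cφ * N) ≤ ∑ p ∈ Finset.univ.filter (fun p : Fin N × Fin N => p.1 < p.2),
        φ (dist (x p.1) (x p.2)))
    (hφ_neg : ∀ u : ℝ, a₀ ≤ u → φ u ≤ 0)
    (Ψ : EuclideanSpace ℝ (Fin 2) × C(Set.Icc (0 : ℝ) 1, EuclideanSpace ℝ (Fin 2)) → ℝ)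
    (hΨ : ∀ p, -(c₁ * (1 + ‖p.2‖ ^ ((2 : ℝ) + δ))) ≤ Ψ p)
    (N : ℕ) (hN : 1 ≤ N)
    (X : Fin N → EuclideanSpace ℝ (Fin 2) × C(Set.Icc (0 : ℝ) 1, EuclideanSpace ℝ (Fin 2))) :
    -((c₁ + cφ) * ∑ i, (1 + ‖(X i).2‖ ^ ((2 : ℝ) + δ))) ≤
      (∑ i, Ψ (X i)) +
        ∑ p ∈ Finset.univ.filter (fun p : Fin N × Fin N => p.1 < p.2),
          diffusionPairPotential a₀ φ φt (X p.1) (X p.2) := by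
  set S := ∑ i, (1 + ‖(X i).2‖ ^ ((2 : ℝ) + δ))
  have hself : -(c₁ * S) ≤ ∑ i, Ψ (X i) := by
    rw [mul_sum, ← sum_neg_distrib]
    exact sum_le_sum fun i _ => hΨ (X i)
  have hcount : (N : ℝ) ≤ S := by
    simpa using card_le_sum_one_add fun i => Real.rpow_nonneg (norm_nonneg (X i).2) (2 + δ)
  have hpair : -(cφ * S) ≤ ∑ p ∈ univ.filter (fun p : Fin N × Fin N => p.1 < p.2),
      diffusionPairPotential a₀ φ φt (X p.1) (X p.2) :=
    calc -(cφ * S) ≤ -(cφ * N) := neg_le_neg (mul_le_mul_of_nonneg_left hcount hcφ)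
      _ ≤ _ := hφ_stable N hN fun i => (X i).1
      _ ≤ _ := sum_le_sum fun p _ => le_diffusionPairPotential hφt_nonneg hφ_neg _ _
  linarith

/-- The energy `H = Σ_i Ψ(𝘅_i) + Σ_{i<j} Φ(𝘅_i,𝘅_j)` of the diffusion model satisfies
the stability assumption `(H_st)`:
`H ≥ −(c₁+c_φ)·Σ_i (1+‖m_i‖^{2+δ})`. -/
theorem diffusion_energy_stable
    (a₀ cφ δ c₁ : ℝ) (ha₀ : 0 < a₀) (hcφ : 0 ≤ cφ) (hδ : 0 < δ) (hc₁ : 0 ≤ c₁)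
    (φ φt : ℝ → ℝ) (hφt_cont : Continuous φt) (hφt_nonneg : ∀ u, 0 ≤ φt u)
    (hφ_stable : ∀ N : ℕ, 1 ≤ N → ∀ x : Fin N → EuclideanSpace ℝ (Fin 2),
      -(cφ * N) ≤ ∑ p ∈ Finset.univ.filter (fun p : Fin N × Fin N => p.1 < p.2),
        φ (dist (x p.1) (x p.2)))
    (hφ_neg : ∀ u : ℝ, a₀ ≤ u → φ u ≤ 0)
    (Ψ : EuclideanSpace ℝ (Fin 2) × C(Set.Icc (0 : ℝ) 1, EuclideanSpace ℝ (Fin 2)) → ℝ)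
    (hΨ : ∀ p, -(c₁ * (1 + ‖p.2‖ ^ ((2 : ℝ) + δ))) ≤ Ψ p)
    (N : ℕ) (hN : 1 ≤ N)
    (X : Fin N → EuclideanSpace ℝ (Fin 2) × C(Set.Icc (0 : ℝ) 1, EuclideanSpace ℝ (Fin 2))) :
    -((c₁ + cφ) * ∑ i, (1 + ‖(X i).2‖ ^ ((2 : ℝ) + δ))) ≤
      (∑ i, Ψ (X i)) +
        ∑ p ∈ Finset.univ.filter (fun p : Fin N × Fin N => p.1 < p.2),
          diffusionPairPotential a₀ φ φt (X p.1) (X p.2) :=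
  diffusion_energy_stable_general a₀ cφ δ c₁ hcφ φ φt hφt_nonneg hφ_stable hφ_neg Ψ hΨ N hN X
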